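/- Let (A,B,P), F_1, F_2, G_1, G_2 be as in the context, and assume in addition that D_P A = F_1 D_P + F_2* D_P P and D_P B = F_2 D_P + F_1* D_P P (identities that the fundamental operators of any tetrablock contraction satisfy). Then for every vector η in 𝒟_{P*} one has F_1* D_P D_{P*} η − F_2 P* η = D_P D_{P*} G_1 η − P* G_2* η and F_2* D_P D_{P*} η − F_1 P* η = D_P D_{P*} G_2 η − P* G_1* η (all terms lie in 𝒟_P, since P* maps 𝒟_{P*} into 𝒟_P). -/

import Mathlib

open ContinuousLinearMap

variable {H : Type*} [NormedAddCommGroup H] [InnerProductSpace ℂ H] [CompleteSpace H]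

/-- The defect operator `D_P = (I - P*P)^{1/2}` of an operator `P`. -/
noncomputable def defectOp (P : H →L[ℂ] H) : H →L[ℂ] H :=
  CFC.sqrt (1 - adjoint P ∘L P)

/-- The defect space `𝒟_P`, the closure of the range of `D_P`. -/
noncomputable def defectSp (P : H →L[ℂ] H) : Submodule ℂ H :=
  (LinearMap.range (defectOp P : H →ₗ[ℂ] H)).topologicalClosure

instance (P : H →L[ℂ] H) : CompleteSpace (defectSp P) :=
  (Submodule.isClosed_topologicalClosure _).completeSpace_coe

/-- `D_P h`, viewed as an element of the defect space `𝒟_P`. -/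
noncomputable def toDef (P : H →L[ℂ] H) (h : H) : defectSp P :=
  ⟨defectOp P h,
    (LinearMap.range (defectOp P : H →ₗ[ℂ] H)).le_topologicalClosure (LinearMap.mem_range_self _ h)⟩

set_option maxHeartbeats 2000000
set_option synthInstance.maxHeartbeats 200000


open Polynomial in
lemma intertwine_cfc {A : Type*} [CStarAlgebra A] {p a b : A}
    (ha : IsSelfAdjoint a) (hb : IsSelfAdjoint b) (hpab : p * a = b * p)
    (f : ℝ → ℝ) (hf : Continuous f) : p * cfc f a = cfc f b * p := by
  let s : Set ℝ := spectrum ℝ a ∪ spectrum ℝ b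
  have hsc : CompactSpace s := by
    rw [← isCompact_iff_compactSpace]
    exact (ContinuousFunctionalCalculus.isCompact_spectrum a).union
      (ContinuousFunctionalCalculus.isCompact_spectrum b)
  let ιa : C(spectrum ℝ a, s) := ⟨Set.inclusion Set.subset_union_left,
    continuous_inclusion Set.subset_union_left⟩
  let ιb : C(spectrum ℝ b, s) := ⟨Set.inclusion Set.subset_union_right,
    continuous_inclusion Set.subset_union_right⟩
  let Φ : C(s, ℝ) → A := fun g => cfcHom ha (g.comp ιa)
  let Ψ : C(s, ℝ) → A := fun g => cfcHom hb (g.comp ιb)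
  have hΦc : Continuous Φ :=
    (cfcHom_isClosedEmbedding ha).continuous.comp (ContinuousMap.continuous_precomp ιa)
  have hΨc : Continuous Ψ :=
    (cfcHom_isClosedEmbedding hb).continuous.comp (ContinuousMap.continuous_precomp ιb)
  have key : ∀ g : C(s, ℝ), p * Φ g = Ψ g * p := by
    intro g
    induction g using ContinuousMap.induction_on_of_compact with
    | const r =>
      have h1 : (ContinuousMap.const s r).comp ιa
          = algebraMap ℝ C(spectrum ℝ a, ℝ) r := by ext x; rfl
      have h2 : (ContinuousMap.const s r).comp ιb
          = algebraMap ℝ C(spectrum ℝ b, ℝ) r := by ext x; rfl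
      simp only [Φ, Ψ, h1, h2, AlgHomClass.commutes]
      exact (Algebra.commutes r p).symm
    | id =>
      have h1 : ((ContinuousMap.id ℝ).restrict s).comp ιa
          = (ContinuousMap.id ℝ).restrict (spectrum ℝ a) := by ext x; rfl
      have h2 : ((ContinuousMap.id ℝ).restrict s).comp ιb
          = (ContinuousMap.id ℝ).restrict (spectrum ℝ b) := by ext x; rfl
      simp only [Φ, Ψ, h1, h2, cfcHom_id]
      exact hpab
    | star_id =>
      have hs : star ((ContinuousMap.id ℝ).restrict s) = (ContinuousMap.id ℝ).restrict s := by
        ext x; exact star_trivial _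
      rw [hs]
      have h1 : ((ContinuousMap.id ℝ).restrict s).comp ιa
          = (ContinuousMap.id ℝ).restrict (spectrum ℝ a) := by ext x; rfl
      have h2 : ((ContinuousMap.id ℝ).restrict s).comp ιb
          = (ContinuousMap.id ℝ).restrict (spectrum ℝ b) := by ext x; rfl
      simp only [Φ, Ψ, h1, h2, cfcHom_id]
      exact hpab
    | add g₁ g₂ h₁ h₂ =>
      simp only [Φ, Ψ, ContinuousMap.add_comp, map_add, mul_add, add_mul] at h₁ h₂ ⊢
      rw [h₁, h₂]
    | mul g₁ g₂ h₁ h₂ =>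
      simp only [Φ, Ψ, ContinuousMap.mul_comp, map_mul] at h₁ h₂ ⊢
      calc p * (cfcHom ha (g₁.comp ιa) * cfcHom ha (g₂.comp ιa))
          = (p * cfcHom ha (g₁.comp ιa)) * cfcHom ha (g₂.comp ιa) := by rw [mul_assoc]
        _ = cfcHom hb (g₁.comp ιb) * (p * cfcHom ha (g₂.comp ιa)) := by rw [h₁, mul_assoc]
        _ = cfcHom hb (g₁.comp ιb) * (cfcHom hb (g₂.comp ιb) * p) := by rw [h₂]
        _ = _ := by rw [← mul_assoc]
    | frequently g hg =>
      have hcl : IsClosed {g : C(s, ℝ) | p * Φ g = Ψ g * p} :=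
        isClosed_eq (continuous_const.mul hΦc) (hΨc.mul continuous_const)
      exact hcl.closure_subset (mem_closure_iff_frequently.mpr hg)
  have hfa : cfc f a = Φ (ContinuousMap.restrict s ⟨f, hf⟩) := by
    rw [cfc_apply f a ha hf.continuousOn]
    show _ = cfcHom ha _
    congr 1
  have hfb : cfc f b = Ψ (ContinuousMap.restrict s ⟨f, hf⟩) := by
    rw [cfc_apply f b hb hf.continuousOn]
    show _ = cfcHom hb _
    congr 1
  rw [hfa, hfb]
  exact key _

lemma sqrt_eq_real_cfc {A : Type*} [CStarAlgebra A] [PartialOrder A] [StarOrderedRing A]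
    {a : A} (ha : 0 ≤ a) : CFC.sqrt a = cfc Real.sqrt a := by
  rw [CFC.sqrt_eq_cfc, cfc_nnreal_eq_real _ _ ha]
  congr 1
  funext x
  simp only [Real.sqrt]

lemma defect_nonneg (P : H →L[ℂ] H) (hP : ‖P‖ ≤ 1) :
    (0 : H →L[ℂ] H) ≤ 1 - adjoint P ∘L P := by
  have h : star P * P ∈ Set.Icc (0 : H →L[ℂ] H) 1 :=
    CStarAlgebra.mem_Icc_iff_norm_le_one.mpr ⟨star_mul_self_nonneg P,
      by rw [CStarRing.norm_star_mul_self]; exact mul_le_one₀ hP (norm_nonneg _) hP⟩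
  have := sub_nonneg.mpr h.2
  rwa [star_eq_adjoint, mul_def] at this

lemma defectOp_sa (P : H →L[ℂ] H) : IsSelfAdjoint (defectOp P) :=
  IsSelfAdjoint.of_nonneg (CFC.sqrt_nonneg _)

lemma defectOp_sq (P : H →L[ℂ] H) (hP : ‖P‖ ≤ 1) :
    defectOp P ∘L defectOp P = 1 - adjoint P ∘L P := by
  rw [← mul_def]
  exact CFC.sqrt_mul_sqrt_self _ (defect_nonneg P hP)

lemma norm_adjoint_le (P : H →L[ℂ] H) (hP : ‖P‖ ≤ 1) : ‖adjoint P‖ ≤ 1 := by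
  rwa [LinearIsometryEquiv.norm_map adjoint P]

lemma defectOp_comm (P : H →L[ℂ] H) (hP : ‖P‖ ≤ 1) :
    P ∘L defectOp P = defectOp (adjoint P) ∘L P := by
  have h1 : (0 : H →L[ℂ] H) ≤ 1 - adjoint P ∘L P := defect_nonneg P hP
  have h2 : (0 : H →L[ℂ] H) ≤ 1 - adjoint (adjoint P) ∘L adjoint P :=
    defect_nonneg _ (norm_adjoint_le P hP)
  show P * defectOp P = defectOp (adjoint P) * P
  unfold defectOp
  rw [sqrt_eq_real_cfc h1, sqrt_eq_real_cfc h2]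
  refine intertwine_cfc (IsSelfAdjoint.of_nonneg h1) (IsSelfAdjoint.of_nonneg h2)
    ?_ Real.sqrt Real.continuous_sqrt
  rw [adjoint_adjoint, ← mul_def (adjoint P) P, ← mul_def P (adjoint P),
    mul_sub, sub_mul, mul_one, one_mul, ← mul_assoc]

local notation "⟪" x ", " y "⟫" => @inner ℂ _ _ x y

lemma defectSp_coe (P : H →L[ℂ] H) :
    (defectSp P : Set H) = closure (Set.range (defectOp P)) := by
  rw [defectSp, Submodule.topologicalClosure_coe]
  congr 1

lemma dense_toDef (P : H →L[ℂ] H) : Dense (Set.range (toDef P)) := by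
  intro η
  rw [closure_subtype]
  have himg : (Subtype.val '' Set.range (toDef P)) = Set.range (defectOp P) := by
    rw [← Set.range_comp]; rfl
  rw [himg]
  have h2 := η.2
  rw [← SetLike.mem_coe, defectSp_coe] at h2
  exact h2

lemma eq_of_defect (P : H →L[ℂ] H) {y z : H} (hy : y ∈ defectSp P) (hz : z ∈ defectSp P)
    (h : ∀ w : H, ⟪defectOp P w, y⟫ = ⟪defectOp P w, z⟫) : y = z := by
  have hmem : y - z ∈ defectSp P := sub_mem hy hz
  have hsubset : Set.range (defectOp P) ⊆ {w : H | ⟪w, y - z⟫ = 0} := by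
    rintro _ ⟨w, rfl⟩
    simp only [Set.mem_setOf_eq, inner_sub_right, h w, sub_self]
  have hcl : IsClosed {w : H | ⟪w, y - z⟫ = 0} :=
    isClosed_eq (continuous_id.inner continuous_const) continuous_const
  have hvc : y - z ∈ closure (Set.range (defectOp P)) := by
    rw [← defectSp_coe]
    exact hmem
  have hzero : ⟪y - z, y - z⟫ = 0 := closure_minimal hsubset hcl hvc
  exact sub_eq_zero.mp (inner_self_eq_zero.mp hzero)

theorem key (P : H →L[ℂ] H) (hP : ‖P‖ ≤ 1) (A B : H →L[ℂ] H)
    (hBP : B ∘L P = P ∘L B)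
    (F₁ F₂ : defectSp P →L[ℂ] defectSp P)
    (G₁ G₂ : defectSp (adjoint P) →L[ℂ] defectSp (adjoint P))
    (hF₁ : ∀ h : H, A h - adjoint B (P h) = defectOp P (F₁ (toDef P h) : H))
    (hF₂ : ∀ h : H, B h - adjoint A (P h) = defectOp P (F₂ (toDef P h) : H))
    (hG₁ : ∀ h : H, adjoint A h - B (adjoint P h)
      = defectOp (adjoint P) (G₁ (toDef (adjoint P) h) : H))
    (hG₂ : ∀ h : H, adjoint B h - A (adjoint P h)
      = defectOp (adjoint P) (G₂ (toDef (adjoint P) h) : H))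
    (hP'map : ∀ x : H, x ∈ defectSp (adjoint P) → adjoint P x ∈ defectSp P) :
    ∀ η : defectSp (adjoint P),
      (adjoint F₁ (toDef P (defectOp (adjoint P) (η : H))) : H)
          - ((F₂ ⟨adjoint P (η : H), hP'map _ η.2⟩ : defectSp P) : H)
        = defectOp P (defectOp (adjoint P) (G₁ η : H)) - adjoint P (adjoint G₂ η : H) := by
  have hP' : ‖adjoint P‖ ≤ 1 := norm_adjoint_le P hP
  have hsaD : ∀ u v : H, ⟪defectOp P u, v⟫ = ⟪u, defectOp P v⟫ := by
    intro u v
    conv_lhs => rw [← (defectOp_sa P).adjoint_eq]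
    exact adjoint_inner_left _ _ _
  have hsaD' : ∀ u v : H, ⟪defectOp (adjoint P) u, v⟫ = ⟪u, defectOp (adjoint P) v⟫ := by
    intro u v
    conv_lhs => rw [← (defectOp_sa (adjoint P)).adjoint_eq]
    exact adjoint_inner_left _ _ _
  have hsq : ∀ u : H, defectOp P (defectOp P u) = u - adjoint P (P u) := by
    intro u
    have := DFunLike.congr_fun (defectOp_sq P hP) u
    simpa using this
  have hsq' : ∀ u : H,
      defectOp (adjoint P) (defectOp (adjoint P) u) = u - P (adjoint P u) := by
    intro u
    have := DFunLike.congr_fun (defectOp_sq (adjoint P) hP') u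
    simpa [adjoint_adjoint] using this
  have hcomm : ∀ u : H, P (defectOp P u) = defectOp (adjoint P) (P u) := by
    intro u
    have := DFunLike.congr_fun (defectOp_comm P hP) u
    simpa using this
  have hcomm' : ∀ u : H,
      defectOp P (adjoint P u) = adjoint P (defectOp (adjoint P) u) := by
    intro u
    have h := congrArg adjoint (defectOp_comm P hP)
    rw [adjoint_comp, adjoint_comp, (defectOp_sa P).adjoint_eq,
      (defectOp_sa (adjoint P)).adjoint_eq] at h
    have := DFunLike.congr_fun h u
    simpa using this
  have hswap : ∀ z : H, adjoint B (adjoint P z) = adjoint P (adjoint B z) := by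
    intro z
    have h := congrArg adjoint hBP
    rw [adjoint_comp, adjoint_comp] at h
    exact (DFunLike.congr_fun h z).symm
  have hF₂' : ∀ h : H, defectOp P ((adjoint F₂ (toDef P h) : defectSp P) : H)
      = adjoint B h - adjoint P (A h) := by
    intro h
    apply ext_inner_left ℂ
    intro w
    calc ⟪w, defectOp P ((adjoint F₂ (toDef P h) : defectSp P) : H)⟫
        = ⟪defectOp P w, ((adjoint F₂ (toDef P h) : defectSp P) : H)⟫ := (hsaD w _).symm
      _ = ⟪toDef P w, adjoint F₂ (toDef P h)⟫ :=
          ((defectSp P).coe_inner (toDef P w) (adjoint F₂ (toDef P h))).symm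
      _ = ⟪F₂ (toDef P w), toDef P h⟫ := adjoint_inner_right _ _ _
      _ = ⟪(F₂ (toDef P w) : H), defectOp P h⟫ :=
          (defectSp P).coe_inner (F₂ (toDef P w)) (toDef P h)
      _ = ⟪defectOp P (F₂ (toDef P w) : H), h⟫ := (hsaD _ _).symm
      _ = ⟪B w - adjoint A (P w), h⟫ := by rw [← hF₂ w]
      _ = ⟪w, adjoint B h - adjoint P (A h)⟫ := by
          simp only [inner_sub_left, inner_sub_right, adjoint_inner_left, adjoint_inner_right]
  have swap1 : ∀ u w : H, ⟪u, w - P (adjoint P w)⟫ = ⟪u - P (adjoint P u), w⟫ := by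
    intro u w
    rw [inner_sub_right, inner_sub_left]
    congr 1
    rw [← adjoint_inner_left P, adjoint_inner_right]
  have swap2 : ∀ u w : H,
      ⟪u, adjoint A w - B (adjoint P w)⟫ = ⟪A u - P (adjoint B u), w⟫ := by
    intro u w
    rw [inner_sub_right, inner_sub_left]
    congr 1
    · exact adjoint_inner_right _ _ _
    · rw [← adjoint_inner_left B, adjoint_inner_right]
  -- main computation at η = toDef (adjoint P) x
  have main : ∀ x : H,
      (adjoint F₁ (toDef P (defectOp (adjoint P) ((toDef (adjoint P) x : H)))) : H)
          - ((F₂ ⟨adjoint P ((toDef (adjoint P) x : H)),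
              hP'map _ (toDef (adjoint P) x).2⟩ : defectSp P) : H)
        = defectOp P (defectOp (adjoint P) (G₁ (toDef (adjoint P) x) : H))
          - adjoint P (adjoint G₂ (toDef (adjoint P) x) : H) := by
    intro x
    have harg : (⟨adjoint P ((toDef (adjoint P) x : H)),
        hP'map _ (toDef (adjoint P) x).2⟩ : defectSp P) = toDef P (adjoint P x) :=
      Subtype.ext (hcomm' x).symm
    rw [harg]
    refine eq_of_defect P ?_ ?_ ?_
    · exact sub_mem (SetLike.coe_mem _) (SetLike.coe_mem _)
    · refine sub_mem ?_ (hP'map _ (SetLike.coe_mem _))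
      exact (LinearMap.range (defectOp P : H →ₗ[ℂ] H)).le_topologicalClosure
        (LinearMap.mem_range_self _ _)
    intro h
    have e1 : ⟪defectOp P h,
        ((adjoint F₁ (toDef P (defectOp (adjoint P) ((toDef (adjoint P) x : H)))) :
          defectSp P) : H)⟫
        = ⟪(A h - adjoint B (P h)) - P (adjoint P (A h - adjoint B (P h))), x⟫ := by
      calc ⟪defectOp P h, ((adjoint F₁ (toDef P (defectOp (adjoint P)
              ((toDef (adjoint P) x : H)))) : defectSp P) : H)⟫
          = ⟪toDef P h, adjoint F₁ (toDef P (defectOp (adjoint P)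
              ((toDef (adjoint P) x : H))))⟫ :=
            ((defectSp P).coe_inner (toDef P h) _).symm
        _ = ⟪F₁ (toDef P h), toDef P (defectOp (adjoint P)
              ((toDef (adjoint P) x : H)))⟫ := adjoint_inner_right _ _ _
        _ = ⟪(F₁ (toDef P h) : H), defectOp P (defectOp (adjoint P)
              ((toDef (adjoint P) x : H)))⟫ :=
            (defectSp P).coe_inner (F₁ (toDef P h)) _
        _ = ⟪defectOp P (F₁ (toDef P h) : H), defectOp (adjoint P)
              (defectOp (adjoint P) x)⟫ := (hsaD _ _).symm
        _ = ⟪A h - adjoint B (P h), x - P (adjoint P x)⟫ := by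
              rw [← hF₁ h, hsq' x]
        _ = ⟪(A h - adjoint B (P h)) - P (adjoint P (A h - adjoint B (P h))), x⟫ :=
              swap1 _ x
    have e2 : ⟪defectOp P h, ((F₂ (toDef P (adjoint P x)) : defectSp P) : H)⟫
        = ⟪P (adjoint B h - adjoint P (A h)), x⟫ := by
      calc ⟪defectOp P h, ((F₂ (toDef P (adjoint P x)) : defectSp P) : H)⟫
          = ⟪toDef P h, F₂ (toDef P (adjoint P x))⟫ :=
            ((defectSp P).coe_inner (toDef P h) (F₂ (toDef P (adjoint P x)))).symm
        _ = ⟪adjoint F₂ (toDef P h), toDef P (adjoint P x)⟫ :=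
            (adjoint_inner_left _ _ _).symm
        _ = ⟪((adjoint F₂ (toDef P h) : defectSp P) : H), defectOp P (adjoint P x)⟫ :=
            (defectSp P).coe_inner (adjoint F₂ (toDef P h)) (toDef P (adjoint P x))
        _ = ⟪defectOp P ((adjoint F₂ (toDef P h) : defectSp P) : H), adjoint P x⟫ :=
            (hsaD _ _).symm
        _ = ⟪adjoint B h - adjoint P (A h), adjoint P x⟫ := by rw [hF₂' h]
        _ = ⟪P (adjoint B h - adjoint P (A h)), x⟫ := adjoint_inner_right _ _ _
    have e3 : ⟪defectOp P h, defectOp P (defectOp (adjoint P)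
          (G₁ (toDef (adjoint P) x) : H))⟫
        = ⟪A (h - adjoint P (P h)) - P (adjoint B (h - adjoint P (P h))), x⟫ := by
      calc ⟪defectOp P h, defectOp P (defectOp (adjoint P) (G₁ (toDef (adjoint P) x) : H))⟫
          = ⟪defectOp P (defectOp P h),
              defectOp (adjoint P) (G₁ (toDef (adjoint P) x) : H)⟫ := (hsaD _ _).symm
        _ = ⟪h - adjoint P (P h), adjoint A x - B (adjoint P x)⟫ := by
            rw [hsq h, ← hG₁ x]
        _ = ⟪A (h - adjoint P (P h)) - P (adjoint B (h - adjoint P (P h))), x⟫ :=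
            swap2 _ x
    have e4 : ⟪defectOp P h,
        adjoint P ((adjoint G₂ (toDef (adjoint P) x) : defectSp (adjoint P)) : H)⟫
        = ⟪adjoint B (P h) - A (adjoint P (P h)), x⟫ := by
      calc ⟪defectOp P h,
            adjoint P ((adjoint G₂ (toDef (adjoint P) x) : defectSp (adjoint P)) : H)⟫
          = ⟪P (defectOp P h),
              ((adjoint G₂ (toDef (adjoint P) x) : defectSp (adjoint P)) : H)⟫ :=
            adjoint_inner_right _ _ _
        _ = ⟪defectOp (adjoint P) (P h),
              ((adjoint G₂ (toDef (adjoint P) x) : defectSp (adjoint P)) : H)⟫ := by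
            rw [hcomm h]
        _ = ⟪toDef (adjoint P) (P h), adjoint G₂ (toDef (adjoint P) x)⟫ :=
            ((defectSp (adjoint P)).coe_inner (toDef (adjoint P) (P h))
              (adjoint G₂ (toDef (adjoint P) x))).symm
        _ = ⟪G₂ (toDef (adjoint P) (P h)), toDef (adjoint P) x⟫ := adjoint_inner_right _ _ _
        _ = ⟪(G₂ (toDef (adjoint P) (P h)) : H), defectOp (adjoint P) x⟫ :=
            (defectSp (adjoint P)).coe_inner (G₂ (toDef (adjoint P) (P h)))
              (toDef (adjoint P) x)
        _ = ⟪defectOp (adjoint P) (G₂ (toDef (adjoint P) (P h)) : H), x⟫ := (hsaD' _ _).symm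
        _ = ⟪adjoint B (P h) - A (adjoint P (P h)), x⟫ := by rw [← hG₂ (P h)]
    rw [inner_sub_right, inner_sub_right, e1, e2, e3, e4,
      ← inner_sub_left, ← inner_sub_left]
    congr 1
    simp only [map_sub]
    rw [hswap (P h)]
    abel
  -- extend by density
  intro η
  have hfun : (fun η : defectSp (adjoint P) =>
      ((adjoint F₁ (toDef P (defectOp (adjoint P) (η : H))) : defectSp P) : H)
        - ((F₂ ⟨adjoint P (η : H), hP'map _ η.2⟩ : defectSp P) : H))
      = (fun η : defectSp (adjoint P) =>
        defectOp P (defectOp (adjoint P) (G₁ η : H))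
          - adjoint P ((adjoint G₂ η : defectSp (adjoint P)) : H)) := by
    refine Continuous.ext_on (dense_toDef (adjoint P)) ?_ ?_ ?_
    · apply Continuous.sub
      · exact continuous_subtype_val.comp <| (adjoint F₁).continuous.comp <|
          Continuous.subtype_mk ((defectOp P).continuous.comp <|
            (defectOp (adjoint P)).continuous.comp continuous_subtype_val) _
      · exact continuous_subtype_val.comp <| F₂.continuous.comp <|
          Continuous.subtype_mk ((adjoint P).continuous.comp continuous_subtype_val) _
    · apply Continuous.sub
      · exact (defectOp P).continuous.comp <| (defectOp (adjoint P)).continuous.comp <|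
          continuous_subtype_val.comp G₁.continuous
      · exact (adjoint P).continuous.comp <| continuous_subtype_val.comp (adjoint G₂).continuous
    · rintro _ ⟨x, rfl⟩
      exact main x
  exact congrFun hfun η

/-- Lemma 2.5 (`tetralem3`): for every `η ∈ 𝒟_{P*}`,
`F₁* D_P D_{P*} η − F₂ P* η = D_P D_{P*} G₁ η − P* G₂* η` and
`F₂* D_P D_{P*} η − F₁ P* η = D_P D_{P*} G₂ η − P* G₁* η`. -/
theorem statement2
    (A B P : H →L[ℂ] H)
    (hAB : A ∘L B = B ∘L A) (hAP : A ∘L P = P ∘L A) (hBP : B ∘L P = P ∘L B)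
    (hP : ‖P‖ ≤ 1)
    (F₁ F₂ : defectSp P →L[ℂ] defectSp P)
    (G₁ G₂ : defectSp (adjoint P) →L[ℂ] defectSp (adjoint P))
    (hF₁ : ∀ h : H, A h - adjoint B (P h) = defectOp P (F₁ (toDef P h) : H))
    (hF₂ : ∀ h : H, B h - adjoint A (P h) = defectOp P (F₂ (toDef P h) : H))
    (hG₁ : ∀ h : H, adjoint A h - B (adjoint P h)
      = defectOp (adjoint P) (G₁ (toDef (adjoint P) h) : H))
    (hG₂ : ∀ h : H, adjoint B h - A (adjoint P h)
      = defectOp (adjoint P) (G₂ (toDef (adjoint P) h) : H))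
    (hDA : ∀ h : H, defectOp P (A h)
      = (F₁ (toDef P h) : H) + (adjoint F₂ (toDef P (P h)) : H))
    (hDB : ∀ h : H, defectOp P (B h)
      = (F₂ (toDef P h) : H) + (adjoint F₁ (toDef P (P h)) : H))
    (hP'map : ∀ x : H, x ∈ defectSp (adjoint P) → adjoint P x ∈ defectSp P) :
    ∀ η : defectSp (adjoint P),
      (adjoint F₁ (toDef P (defectOp (adjoint P) (η : H))) : H)
          - ((F₂ ⟨adjoint P (η : H), hP'map _ η.2⟩ : defectSp P) : H)
        = defectOp P (defectOp (adjoint P) (G₁ η : H)) - adjoint P (adjoint G₂ η : H) ∧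
      (adjoint F₂ (toDef P (defectOp (adjoint P) (η : H))) : H)
          - ((F₁ ⟨adjoint P (η : H), hP'map _ η.2⟩ : defectSp P) : H)
        = defectOp P (defectOp (adjoint P) (G₂ η : H)) - adjoint P (adjoint G₁ η : H) := by
  intro η
  exact ⟨key P hP A B hBP F₁ F₂ G₁ G₂ hF₁ hF₂ hG₁ hG₂ hP'map η,
    key P hP B A hAP F₂ F₁ G₂ G₁ hF₂ hF₁ hG₂ hG₁ hP'map η⟩
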